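/- arXiv:2603.12065 — 3 statements merged into one kernel-verified Lean document; each statement's English description precedes it below -/
import Mathlib

section
/- Let Ω ⊂ ℝ^d be a bounded smooth domain, s ∈ (0,1), p ≥ 2. Let u be a viscosity subsolution (respectively, supersolution) of ∂_t u + (−Δ_p)^s u = 0 in Ω×(t₁,t₂]. Assume φ ∈ C²(Q_r(x₀,t₀)) (C² in space, C¹ in time), where Q_r(x₀,t₀) ⊂ Ω×(t₁,t₂], and that φ touches u from above (respectively, below) at (x₀,t₀) in Q_r(x₀,t₀). Then the principal value defining (−Δ_p)^s u(x₀,t₀) exists and ∂_t φ(x₀,t₀) + (−Δ_p)^s u(x₀,t₀) ≤ 0 (respectively, ≥ 0). -/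
open MeasureTheory Real Set Filter Topology

noncomputable section

/-- `d`-dimensional Euclidean space. -/
abbrev Rd (d : ℕ) : Type := EuclideanSpace ℝ (Fin d)

/-- `J_p(τ) = |τ|^{p-2} τ`. -/
def Jp (p τ : ℝ) : ℝ := |τ| ^ (p - 2) * τ

/-- The kernel exponent `d + s p`. -/
def kexp (d : ℕ) (s p : ℝ) : ℝ := (d : ℝ) + s * p

/-- The integrand of the tail norm. -/
def tailKer (d : ℕ) (s p : ℝ) (w : Rd d → ℝ) (x : Rd d) : ℝ :=
  |w x| ^ (p - 1) / (1 + ‖x‖ ^ kexp d s p)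

/-- Membership in the tail space `L^{p-1}_{sp}(ℝ^d)`. -/
def MemTailSpace (d : ℕ) (s p : ℝ) (w : Rd d → ℝ) : Prop :=
  MeasureTheory.Integrable (tailKer d s p w)

/-- The tail norm `‖w‖_{L^{p-1}_{sp}}`. -/
def tailNorm (d : ℕ) (s p : ℝ) (w : Rd d → ℝ) : ℝ :=
  (∫ x, tailKer d s p w x) ^ (1 / (p - 1))

/-- Parabolic cylinder `Q_r(x₀,t₀) = B_r(x₀) × (t₀ - r², t₀]`. -/
def pCyl (d : ℕ) (x₀ : Rd d) (t₀ r : ℝ) : Set (Rd d × ℝ) :=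
  Metric.ball x₀ r ×ˢ Ioc (t₀ - r ^ 2) t₀

/-- The principal value defining `(-Δ_p)^s u (x)` exists and equals `L`. -/
def HasFracPLap (d : ℕ) (s p : ℝ) (u : Rd d → ℝ) (x : Rd d) (L : ℝ) : Prop :=
  Filter.Tendsto (fun ε : ℝ =>
      ∫ y in {y : Rd d | ε ≤ ‖y - x‖}, Jp p (u x - u y) / ‖x - y‖ ^ kexp d s p)
    (𝓝[>] (0 : ℝ)) (𝓝 L)

/-- Gagliardo-type energy pairing `E(u, φ)`. -/
def energyPairing (d : ℕ) (s p : ℝ) (u φ : Rd d → ℝ) : ℝ :=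
  ∫ x : Rd d, ∫ y : Rd d, Jp p (u x - u y) * (φ x - φ y) / ‖x - y‖ ^ kexp d s p

/-- Admissible nonnegative smooth test functions spatially supported in `K`. -/
structure IsTestFun (d : ℕ) (K : Set (Rd d)) (φ : Rd d → ℝ → ℝ) : Prop where
  smooth : ContDiff ℝ (⊤ : ℕ∞) (fun q : Rd d × ℝ => φ q.1 q.2)
  nonneg : ∀ x t, 0 ≤ φ x t
  supp : ∀ t, tsupport (fun x => φ x t) ⊆ K

/-- Regularity requirements in the definition of weak (sub/super)solutions. -/
structure WeakReg (d : ℕ) (s p : ℝ) (u : Rd d → ℝ → ℝ) (Ω : Set (Rd d)) (t₁ t₂ : ℝ) : Prop where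
  meas : ∀ t ∈ Ioc t₁ t₂, AEMeasurable (fun x => u x t)
  l2loc : ∀ K : Set (Rd d), IsCompact K → K ⊆ Ω → ∀ t ∈ Ioc t₁ t₂,
      MeasureTheory.IntegrableOn (fun x => (u x t) ^ 2) K
  l2cont : ∀ K : Set (Rd d), IsCompact K → K ⊆ Ω → ∀ t₀ ∈ Ioc t₁ t₂,
      Filter.Tendsto (fun t => ∫ x in K, (u x t - u x t₀) ^ 2)
        (𝓝[Ioc t₁ t₂] t₀) (𝓝 0)
  sobolev : ∀ K : Set (Rd d), IsCompact K → K ⊆ Ω →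
      ∀ τ₁ τ₂ : ℝ, t₁ < τ₁ → τ₂ ≤ t₂ →
      MeasureTheory.IntegrableOn
        (fun q : ℝ × Rd d × Rd d =>
          |u q.2.1 q.1 - u q.2.2 q.1| ^ p / ‖q.2.1 - q.2.2‖ ^ kexp d s p)
        (Icc τ₁ τ₂ ×ˢ K ×ˢ K)
  tail : ∀ τ₁ τ₂ : ℝ, t₁ < τ₁ → τ₂ ≤ t₂ → ∃ M : ℝ, ∀ t ∈ Icc τ₁ τ₂,
      MemTailSpace d s p (fun x => u x t) ∧ tailNorm d s p (fun x => u x t) ≤ M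

/-- The quantity appearing in the weak formulation. -/
def weakForm (d : ℕ) (s p : ℝ) (u : Rd d → ℝ → ℝ) (K : Set (Rd d))
    (τ₁ τ₂ : ℝ) (φ : Rd d → ℝ → ℝ) : ℝ :=
  ((∫ x in K, u x τ₂ * φ x τ₂) - ∫ x in K, u x τ₁ * φ x τ₁)
    - (∫ t in Icc τ₁ τ₂, ∫ x in K, u x t * deriv (fun τ => φ x τ) t)
    + ∫ t in Icc τ₁ τ₂, energyPairing d s p (fun x => u x t) (fun x => φ x t)

/-- Weak supersolution of `∂_t u + (-Δ_p)^s u = 0` in `Ω × (t₁, t₂]`. -/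
def IsWeakSupersol (d : ℕ) (s p : ℝ) (u : Rd d → ℝ → ℝ) (Ω : Set (Rd d)) (t₁ t₂ : ℝ) : Prop :=
  WeakReg d s p u Ω t₁ t₂ ∧
    ∀ K : Set (Rd d), IsCompact K → K ⊆ Ω →
      ∀ τ₁ τ₂ : ℝ, t₁ < τ₁ → τ₁ ≤ τ₂ → τ₂ ≤ t₂ →
        ∀ φ : Rd d → ℝ → ℝ, IsTestFun d K φ → 0 ≤ weakForm d s p u K τ₁ τ₂ φ

/-- Weak subsolution of `∂_t u + (-Δ_p)^s u = 0` in `Ω × (t₁, t₂]`. -/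
def IsWeakSubsol (d : ℕ) (s p : ℝ) (u : Rd d → ℝ → ℝ) (Ω : Set (Rd d)) (t₁ t₂ : ℝ) : Prop :=
  WeakReg d s p u Ω t₁ t₂ ∧
    ∀ K : Set (Rd d), IsCompact K → K ⊆ Ω →
      ∀ τ₁ τ₂ : ℝ, t₁ < τ₁ → τ₁ ≤ τ₂ → τ₂ ≤ t₂ →
        ∀ φ : Rd d → ℝ → ℝ, IsTestFun d K φ → weakForm d s p u K τ₁ τ₂ φ ≤ 0

/-- Weak solution: both a weak subsolution and a weak supersolution. -/
def IsWeakSol (d : ℕ) (s p : ℝ) (u : Rd d → ℝ → ℝ) (Ω : Set (Rd d)) (t₁ t₂ : ℝ) : Prop :=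
  IsWeakSubsol d s p u Ω t₁ t₂ ∧ IsWeakSupersol d s p u Ω t₁ t₂

-- The test function `φ_r`: equal to `φ` on the cylinder and to `u` elsewhere.
open Classical in
def glue (d : ℕ) (u φ : Rd d → ℝ → ℝ) (x₀ : Rd d) (t₀ r : ℝ) (x : Rd d) (t : ℝ) : ℝ :=
  if (x, t) ∈ pCyl d x₀ t₀ r then φ x t else u x t

/-- `φ` is `C²` on the cylinder and touches `u` from above at `(x₀,t₀)`. -/
structure TouchesFromAbove (d : ℕ) (u φ : Rd d → ℝ → ℝ) (x₀ : Rd d) (t₀ r : ℝ) : Prop where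
  smooth : ContDiffOn ℝ 2 (fun q : Rd d × ℝ => φ q.1 q.2) (pCyl d x₀ t₀ r)
  touch_eq : φ x₀ t₀ = u x₀ t₀
  touch_le : ∀ q ∈ pCyl d x₀ t₀ r, u q.1 q.2 ≤ φ q.1 q.2

/-- `φ` is `C²` on the cylinder and touches `u` from below at `(x₀,t₀)`. -/
structure TouchesFromBelow (d : ℕ) (u φ : Rd d → ℝ → ℝ) (x₀ : Rd d) (t₀ r : ℝ) : Prop where
  smooth : ContDiffOn ℝ 2 (fun q : Rd d × ℝ => φ q.1 q.2) (pCyl d x₀ t₀ r)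
  touch_eq : φ x₀ t₀ = u x₀ t₀
  touch_ge : ∀ q ∈ pCyl d x₀ t₀ r, φ q.1 q.2 ≤ u q.1 q.2

/-- Viscosity subsolution of `∂_t u + (-Δ_p)^s u = 0` in `Ω × (t₁, t₂]`. -/
def IsViscositySubsol (d : ℕ) (s p : ℝ) (u : Rd d → ℝ → ℝ) (Ω : Set (Rd d)) (t₁ t₂ : ℝ) : Prop :=
  UpperSemicontinuousOn (fun q : Rd d × ℝ => u q.1 q.2) (Ω ×ˢ Ioc t₁ t₂) ∧
  (∀ τ₁ τ₂ : ℝ, t₁ < τ₁ → τ₂ ≤ t₂ → ∃ M : ℝ, ∀ t ∈ Icc τ₁ τ₂,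
      MemTailSpace d s p (fun x => u x t) ∧ tailNorm d s p (fun x => u x t) ≤ M) ∧
  ∀ (x₀ : Rd d) (t₀ r : ℝ), 0 < r → pCyl d x₀ t₀ r ⊆ Ω ×ˢ Ioc t₁ t₂ →
    ∀ φ : Rd d → ℝ → ℝ, TouchesFromAbove d u φ x₀ t₀ r →
      ∃ L : ℝ, HasFracPLap d s p (fun x => glue d u φ x₀ t₀ r x t₀) x₀ L ∧
        derivWithin (fun τ => φ x₀ τ) (Iic t₀) t₀ + L ≤ 0

/-- Viscosity supersolution of `∂_t u + (-Δ_p)^s u = 0` in `Ω × (t₁, t₂]`. -/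
def IsViscositySupersol (d : ℕ) (s p : ℝ) (u : Rd d → ℝ → ℝ) (Ω : Set (Rd d)) (t₁ t₂ : ℝ) : Prop :=
  LowerSemicontinuousOn (fun q : Rd d × ℝ => u q.1 q.2) (Ω ×ˢ Ioc t₁ t₂) ∧
  (∀ τ₁ τ₂ : ℝ, t₁ < τ₁ → τ₂ ≤ t₂ → ∃ M : ℝ, ∀ t ∈ Icc τ₁ τ₂,
      MemTailSpace d s p (fun x => u x t) ∧ tailNorm d s p (fun x => u x t) ≤ M) ∧
  ∀ (x₀ : Rd d) (t₀ r : ℝ), 0 < r → pCyl d x₀ t₀ r ⊆ Ω ×ˢ Ioc t₁ t₂ →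
    ∀ φ : Rd d → ℝ → ℝ, TouchesFromBelow d u φ x₀ t₀ r →
      ∃ L : ℝ, HasFracPLap d s p (fun x => glue d u φ x₀ t₀ r x t₀) x₀ L ∧
        0 ≤ derivWithin (fun τ => φ x₀ τ) (Iic t₀) t₀ + L

/-- Viscosity solution: both a viscosity subsolution and a viscosity supersolution. -/
def IsViscositySol (d : ℕ) (s p : ℝ) (u : Rd d → ℝ → ℝ) (Ω : Set (Rd d)) (t₁ t₂ : ℝ) : Prop :=
  IsViscositySubsol d s p u Ω t₁ t₂ ∧ IsViscositySupersol d s p u Ω t₁ t₂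

/-- The cone of directions `C(a)`. -/
def cone (d : ℕ) (δ₀ : ℝ) (a : Rd d) : Set (Rd d) :=
  {z : Rd d | ‖z‖ < ‖a‖ / 2 ∧ Real.sqrt (1 - δ₀ ^ 2) * (‖a‖ * ‖z‖) ≤ |(inner ℝ a z : ℝ)|}

/-- The strictly concave Lipschitz modulus `ω̃(r) = r + r / (20 log (r/4))`. -/
def tildeOmega (r : ℝ) : ℝ := r + r / (20 * Real.log (r / 4))

/-- Inf-convolution of `u` with parameter `ε` over `ℝ^d × (t₁,t₂]`. -/
def infConv (d : ℕ) (ε t₁ t₂ : ℝ) (u : Rd d → ℝ → ℝ) (x : Rd d) (t : ℝ) : ℝ :=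
  ⨅ q : Rd d × (Ioc t₁ t₂), u q.1 (q.2 : ℝ) + (‖q.1 - x‖ ^ 2 + |t - (q.2 : ℝ)|) / ε

/-! The values `L_ρ` that the viscosity inequality provides on the cylinders `Q_ρ`, `0 < ρ ≤ r`,
increase as `ρ ↓ 0`: on `B_ρ` the test function `φ` lies above `u`, and `J_p` is monotone. They are
bounded by `-∂_t φ(x₀,t₀)` and hence converge. Outside `B_ρ` the truncated integrals of `u` and of
`φ_ρ` agree, and the rest of the latter is the integral of the kernel of `φ(·,t₀)` over annuli
`δ ≤ |y - x₀| < ρ`, which is `O(ρ^{p(1-s)/2})`: the kernel of the tangent affine map of `φ(·,t₀)`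
is odd about `x₀`, and the difference of the two kernels is `O(|y - x₀|^{p - d - sp})`, which is
integrable near `x₀`. So the principal value of `u` exists and equals `lim L_ρ`. The supersolution
case follows by applying this to `-u`. -/

open Metric

section Jp

variable {p : ℝ}

lemma jp_neg (p t : ℝ) : Jp p (-t) = -Jp p t := by simp [Jp]

lemma jp_of_pos {t : ℝ} (ht : 0 < t) : Jp p t = t ^ (p - 1) := by
  rw [Jp, abs_of_pos ht, Real.rpow_sub_one ht.ne', Real.rpow_sub ht, Real.rpow_two]
  field_simp

lemma hasDerivAt_jp_of_pos {t : ℝ} (ht : 0 < t) :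
    HasDerivAt (Jp p) ((p - 1) * |t| ^ (p - 2)) t := by
  have h := Real.hasDerivAt_rpow_const (p := p - 1) (Or.inl ht.ne')
  rw [abs_of_pos ht, show p - 2 = p - 1 - 1 by ring]
  exact h.congr_of_eventuallyEq <| (eventually_gt_nhds ht).mono fun x hx => jp_of_pos hx

lemma hasDerivAt_jp_zero (hp : 2 < p) : HasDerivAt (Jp p) 0 0 := by
  rw [hasDerivAt_iff_tendsto_slope]
  have hcont : ContinuousAt (fun x : ℝ => |x| ^ (p - 2)) 0 :=
    (Real.continuousAt_rpow_const _ _ (Or.inr (by linarith))).comp continuous_abs.continuousAt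
  have h0 : |(0 : ℝ)| ^ (p - 2) = 0 := by simp [Real.zero_rpow (by linarith : p - 2 ≠ 0)]
  have hlim := hcont.tendsto.mono_left (nhdsWithin_le_nhds (s := {0}ᶜ))
  rw [h0] at hlim
  refine hlim.congr' ?_
  filter_upwards [self_mem_nhdsWithin] with x hx
  simp [slope_def_field, Jp, div_eq_mul_inv, mul_assoc, mul_inv_cancel₀ (hx : x ≠ 0)]

lemma hasDerivAt_jp (hp : 2 ≤ p) (t : ℝ) :
    HasDerivAt (Jp p) ((p - 1) * |t| ^ (p - 2)) t := by
  rcases hp.eq_or_lt with rfl | hp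
  · have hid : Jp 2 = id := funext fun x => by simp [Jp]
    rw [hid]
    norm_num
    exact hasDerivAt_id t
  rcases lt_trichotomy t 0 with ht | rfl | ht
  · have h := ((hasDerivAt_jp_of_pos (p := p) (neg_pos.2 ht)).comp t (hasDerivAt_neg t)).neg
    have hodd : -(Jp p ∘ Neg.neg) = Jp p := funext fun x => by simp [jp_neg]
    simpa [hodd] using h
  · simpa [Real.zero_rpow (by linarith : p - 2 ≠ 0)] using hasDerivAt_jp_zero hp
  · exact hasDerivAt_jp_of_pos ht

lemma jp_monotone (hp : 2 ≤ p) : Monotone (Jp p) :=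
  monotone_of_deriv_nonneg (fun t => (hasDerivAt_jp hp t).differentiableAt) fun t => by
    rw [(hasDerivAt_jp hp t).deriv]
    have : 0 ≤ p - 1 := by linarith
    positivity

lemma continuous_jp (hp : 2 ≤ p) : Continuous (Jp p) :=
  continuous_iff_continuousAt.2 fun t => (hasDerivAt_jp hp t).continuousAt

lemma abs_jp_sub_jp_le (hp : 2 ≤ p) {a b M : ℝ} (ha : |a| ≤ M) (hb : |b| ≤ M) :
    |Jp p a - Jp p b| ≤ (p - 1) * M ^ (p - 2) * |a - b| := by
  have hbound : ∀ t ∈ uIcc b a, ‖(p - 1) * |t| ^ (p - 2)‖ ≤ (p - 1) * M ^ (p - 2) := by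
    intro t ht
    have htM : |t| ≤ M := abs_le.2 (uIcc_subset_Icc (abs_le.1 hb) (abs_le.1 ha) ht)
    have hp1 : 0 ≤ p - 1 := by linarith
    rw [Real.norm_eq_abs, abs_of_nonneg (by positivity)]
    gcongr
  simpa [Real.norm_eq_abs] using Convex.norm_image_sub_le_of_norm_hasDerivWithin_le
    (fun t _ => (hasDerivAt_jp hp t).hasDerivWithinAt) hbound (convex_uIcc b a)
    left_mem_uIcc right_mem_uIcc

end Jp

section Analysis

variable {E : Type*} [NormedAddCommGroup E] [NormedSpace ℝ E]

lemma Function.Odd.integral_eq_zero {G : Type*} [AddGroup G] [MeasurableSpace G] [MeasurableNeg G]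
    {μ : Measure G} [μ.IsNegInvariant] {g : G → ℝ} (hg : g.Odd) : ∫ z, g z ∂μ = 0 := by
  have h := integral_neg_eq_self g μ
  rw [show (fun x => g (-x)) = fun x => -g x from funext hg, integral_neg] at h
  linarith

lemma setIntegral_ball_diff_ball_comp_sub_eq_zero [MeasurableSpace E] [BorelSpace E]
    [FiniteDimensional ℝ E] {μ : Measure E} [μ.IsAddHaarMeasure] {g : E → ℝ} (hg : g.Odd)
    (x₀ : E) (δ ρ : ℝ) : ∫ y in ball x₀ ρ \ ball x₀ δ, g (y - x₀) ∂μ = 0 := by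
  set A := ball (0 : E) ρ \ ball 0 δ
  have hA : (ball x₀ ρ \ ball x₀ δ).indicator (fun y => g (y - x₀)) =
      fun y => A.indicator g (y - x₀) := by
    ext y
    simp [A, indicator, dist_eq_norm]
  rw [← integral_indicator (measurableSet_ball.diff measurableSet_ball), hA,
    integral_sub_right_eq_self (A.indicator g)]
  refine Function.Odd.integral_eq_zero fun z => ?_
  simp only [A, indicator, Set.mem_sdiff, mem_ball_zero_iff, norm_neg, hg z]
  split_ifs <;> simp

lemma integrableOn_ball_diff_ball_of_continuousOn {X : Type*} [MetricSpace X] [ProperSpace X]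
    [MeasurableSpace X] [OpensMeasurableSpace X] {μ : Measure X} [IsFiniteMeasureOnCompacts μ]
    {g : X → ℝ} {x₀ : X} {ε δ ρ : ℝ}
    (hg : ContinuousOn g (closedBall x₀ ε \ {x₀})) (hδ : 0 < δ) (hρ : ρ ≤ ε) :
    IntegrableOn g (ball x₀ ρ \ ball x₀ δ) μ := by
  have hsub : closedBall x₀ ε \ ball x₀ δ ⊆ closedBall x₀ ε \ {x₀} :=
    sdiff_subset_sdiff_right (singleton_subset_iff.2 (mem_ball_self hδ))
  refine ((hg.mono hsub).integrableOn_compact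
    ((isCompact_closedBall x₀ ε).diff isOpen_ball)).mono_set ?_
  exact sdiff_subset_sdiff_left ((ball_subset_closedBall).trans (closedBall_subset_closedBall hρ))

lemma norm_sub_sub_fderiv_le {F : Type*} [NormedAddCommGroup F] [NormedSpace ℝ F] {f : E → F}
    {s : Set E} {K : NNReal} (hs : Convex ℝ s) (hf : ∀ x ∈ s, DifferentiableAt ℝ f x)
    (hlip : LipschitzOnWith K (fderiv ℝ f) s) {x y : E} (hx : x ∈ s) (hy : y ∈ s) :
    ‖f y - f x - fderiv ℝ f x (y - x)‖ ≤ K * ‖y - x‖ ^ 2 := by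
  set t := s ∩ closedBall x ‖y - x‖
  have hdiff : ∀ w ∈ t, DifferentiableAt ℝ (fun w => f w - fderiv ℝ f x w) w :=
    fun w hw => (hf w hw.1).sub (fderiv ℝ f x).differentiableAt
  have hbound : ∀ w ∈ t, ‖fderiv ℝ (fun w => f w - fderiv ℝ f x w) w‖ ≤ K * ‖y - x‖ := by
    intro w hw
    rw [fderiv_fun_sub (hf w hw.1) (fderiv ℝ f x).differentiableAt, ContinuousLinearMap.fderiv,
      ← dist_eq_norm]
    refine (hlip.dist_le_mul w hw.1 x hx).trans ?_
    gcongr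
    exact mem_closedBall.1 hw.2
  have h := (hs.inter (convex_closedBall x _)).norm_image_sub_le_of_norm_fderiv_le hdiff hbound
    ⟨hx, mem_closedBall_self (norm_nonneg _)⟩ ⟨hy, mem_closedBall_iff_norm.2 le_rfl⟩
  rw [map_sub, sq, ← mul_assoc]
  convert h using 2
  abel

lemma integrableOn_ball_norm_sub_rpow [MeasurableSpace E] [BorelSpace E] [FiniteDimensional ℝ E]
    {μ : Measure E} [μ.IsAddHaarMeasure]
    (hd : 1 ≤ Module.finrank ℝ E) {e : ℝ} (he : -(Module.finrank ℝ E : ℝ) < e) (x₀ : E) (r : ℝ) :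
    IntegrableOn (fun y => ‖y - x₀‖ ^ e) (ball x₀ r) μ := by
  have h0 : IntegrableOn (fun z : E => ‖z‖ ^ e) (ball 0 r) μ :=
    integrableOn_ball_of_norm_le_rpow (C := 1) (α := -e) hd (by linarith)
      (ae_of_all _ fun z => by simp [abs_of_nonneg (Real.rpow_nonneg (norm_nonneg z) e)])
      (by fun_prop : Measurable fun z : E => ‖z‖ ^ e).aestronglyMeasurable
  have hpre : (· - x₀) ⁻¹' ball (0 : E) r = ball x₀ r := by
    ext y; simp [dist_eq_norm]
  rw [← (measurePreserving_sub_right μ x₀).integrableOn_comp_preimage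
    (measurableEmbedding_subRight x₀), hpre] at h0
  exact h0

lemma exists_abs_jp_sub_jp_fderiv_le {p : ℝ} (hp : 2 ≤ p) {ψ : E → ℝ} {x₀ : E}
    (hψ : ContDiffAt ℝ 2 ψ x₀) :
    ∃ ε > 0, ∃ C ≥ 0, ∀ y ∈ closedBall x₀ ε,
      |Jp p (ψ x₀ - ψ y) - Jp p (-fderiv ℝ ψ x₀ (y - x₀))| ≤ C * ‖y - x₀‖ ^ p := by
  obtain ⟨K, t, ht, hlip⟩ := (hψ.fderiv_right (m := 1) (by norm_num)).exists_lipschitzOnWith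
  have hdiff : ∀ᶠ y in 𝓝 x₀, DifferentiableAt ℝ ψ y :=
    hψ.eventually (by simp) |>.mono fun y hy => hy.differentiableAt (by norm_num)
  obtain ⟨ε', hε', hball⟩ := Metric.mem_nhds_iff.1 (inter_mem ht hdiff)
  set ε := ε' / 2
  have hsub : closedBall x₀ ε ⊆ t ∩ {y | DifferentiableAt ℝ ψ y} :=
    (closedBall_subset_ball (by simp only [ε]; linarith)).trans hball
  set D := fderiv ℝ ψ x₀
  set M := ‖D‖ + K * ε
  have hp1 : 0 ≤ p - 1 := by linarith
  refine ⟨ε, by positivity, (p - 1) * M ^ (p - 2) * K, by positivity, fun y hy => ?_⟩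
  set n := ‖y - x₀‖
  have hn : n ≤ ε := mem_closedBall_iff_norm.1 hy
  have htaylor : |ψ x₀ - ψ y - -D (y - x₀)| ≤ K * n ^ 2 := by
    rw [← abs_neg, show -(ψ x₀ - ψ y - -D (y - x₀)) = ψ y - ψ x₀ - D (y - x₀) by ring]
    exact norm_sub_sub_fderiv_le (convex_closedBall x₀ ε) (fun z hz => (hsub hz).2)
      (hlip.mono fun z hz => (hsub hz).1) (mem_closedBall_self (by positivity)) hy
  have hlin : |-D (y - x₀)| ≤ ‖D‖ * n := by
    rw [abs_neg]; exact D.le_opNorm _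
  have hKn : K * n ^ 2 ≤ K * ε * n := by
    rw [sq, ← mul_assoc]; gcongr
  have hb : |-D (y - x₀)| ≤ M * n := by
    nlinarith [norm_nonneg (y - x₀), K.coe_nonneg, mul_nonneg K.coe_nonneg (norm_nonneg (y - x₀))]
  have ha : |ψ x₀ - ψ y| ≤ M * n := by
    have := abs_sub_abs_le_abs_sub (ψ x₀ - ψ y) (-D (y - x₀))
    simp only [M]; linarith
  calc |Jp p (ψ x₀ - ψ y) - Jp p (-D (y - x₀))|
      ≤ (p - 1) * (M * n) ^ (p - 2) * (K * n ^ 2) := by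
        refine (abs_jp_sub_jp_le hp ha hb).trans ?_
        gcongr
    _ = (p - 1) * M ^ (p - 2) * K * (n ^ (p - 2) * n ^ (2 : ℝ)) := by
        rw [Real.mul_rpow (by positivity) (norm_nonneg _), Real.rpow_two]; ring
    _ = (p - 1) * M ^ (p - 2) * K * n ^ p := by
        rw [← Real.rpow_add' (norm_nonneg _) (by linarith), sub_add_cancel]

lemma exists_tendsto_le_of_antitoneOn {I Λ m : ℝ → ℝ} {ε B : ℝ} (hε : 0 < ε)
    (hanti : AntitoneOn Λ (Ioo 0 ε)) (hB : ∀ ρ ∈ Ioo 0 ε, Λ ρ ≤ B)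
    (hm : Tendsto m (𝓝[>] 0) (𝓝 0)) (hclose : ∀ ρ ∈ Ioo 0 ε, |Λ ρ - I ρ| ≤ m ρ) :
    ∃ L ≤ B, Tendsto I (𝓝[>] 0) (𝓝 L) := by
  have hne : (Ioo 0 ε).Nonempty := nonempty_Ioo.2 hε
  refine ⟨_, csSup_le (hne.image _) (forall_mem_image.2 hB), ?_⟩
  have hΛ := hanti.tendsto_nhdsWithin_Ioo_right hne ⟨B, forall_mem_image.2 hB⟩
  have hdiff : Tendsto (fun ρ => Λ ρ - I ρ) (𝓝[>] 0) (𝓝 0) := by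
    refine squeeze_zero_norm' ?_ hm
    filter_upwards [Ioo_mem_nhdsGT hε] with ρ hρ using hclose ρ hρ
  simpa using hΛ.sub hdiff

end Analysis

section Kernel

variable {d : ℕ} {s p : ℝ}

def fracPLapKernel (d : ℕ) (s p : ℝ) (w : Rd d → ℝ) (x y : Rd d) : ℝ :=
  Jp p (w x - w y) / ‖x - y‖ ^ kexp d s p

lemma hasFracPLap_iff {w : Rd d → ℝ} {x : Rd d} {L : ℝ} :
    HasFracPLap d s p w x L ↔
      Tendsto (fun ε => ∫ y in (ball x ε)ᶜ, fracPLapKernel d s p w x y) (𝓝[>] 0) (𝓝 L) := by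
  have h : ∀ ε : ℝ, {y : Rd d | ε ≤ ‖y - x‖} = (ball x ε)ᶜ := fun ε => by
    ext y; simp [dist_eq_norm]
  simp only [HasFracPLap, h, fracPLapKernel]

lemma HasFracPLap.unique {w : Rd d → ℝ} {x : Rd d} {L L' : ℝ} (h : HasFracPLap d s p w x L)
    (h' : HasFracPLap d s p w x L') : L = L' :=
  tendsto_nhds_unique h h'

lemma HasFracPLap.neg {w : Rd d → ℝ} {x : Rd d} {L : ℝ} (h : HasFracPLap d s p w x L) :
    HasFracPLap d s p (fun y => -w y) x (-L) := by
  refine (Tendsto.neg h).congr fun ε => ?_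
  rw [← integral_neg]
  simp only [neg_sub_neg, ← neg_div, ← jp_neg, neg_sub]

lemma hasFracPLap_zero_of_not_integrableOn {w : Rd d → ℝ} {x : Rd d} {ε₀ : ℝ} (hε₀ : 0 < ε₀)
    (h : ¬IntegrableOn (fracPLapKernel d s p w x) (ball x ε₀)ᶜ) : HasFracPLap d s p w x 0 := by
  rw [hasFracPLap_iff]
  refine tendsto_const_nhds.congr' ?_
  filter_upwards [Ioc_mem_nhdsGT hε₀] with ε hε
  exact (integral_undef fun hi => h <|
    IntegrableOn.mono_set hi (compl_subset_compl.2 (ball_subset_ball hε.2))).symm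

lemma fracPLapKernel_le_of_le (hp : 2 ≤ p) {w₁ w₂ : Rd d → ℝ} {x y : Rd d} (hx : w₁ x = w₂ x)
    (hy : w₁ y ≤ w₂ y) : fracPLapKernel d s p w₂ x y ≤ fracPLapKernel d s p w₁ x y := by
  unfold fracPLapKernel
  gcongr
  exact jp_monotone hp (by linarith)

lemma continuousOn_fracPLapKernel (hp : 2 ≤ p) {w : Rd d → ℝ} {U : Set (Rd d)}
    (hw : ContinuousOn w U) (x : Rd d) : ContinuousOn (fracPLapKernel d s p w x) (U \ {x}) := by
  refine ((continuous_jp hp).comp_continuousOn (continuousOn_const.sub (hw.mono sdiff_subset))).div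
    ?_ fun y hy => ?_
  · exact fun y hy => ((continuous_const.sub continuous_id).norm.continuousAt.rpow_const
      (Or.inl (norm_ne_zero_iff.2 (sub_ne_zero.2 (Ne.symm hy.2))))).continuousWithinAt
  exact (Real.rpow_pos_of_pos (norm_pos_iff.2 (sub_ne_zero.2 (Ne.symm hy.2))) _).ne'

lemma setIntegral_fracPLapKernel_affine_eq_zero (c : ℝ) (A : Rd d →L[ℝ] ℝ) (x₀ : Rd d)
    (δ ρ : ℝ) :
    ∫ y in ball x₀ ρ \ ball x₀ δ, fracPLapKernel d s p (fun y => c + A (y - x₀)) x₀ y = 0 := by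
  have hodd : (fun z : Rd d => Jp p (-A z) / ‖z‖ ^ kexp d s p).Odd := fun z => by
    simp [jp_neg, neg_div]
  refine (setIntegral_congr_fun (measurableSet_ball.diff measurableSet_ball) fun y _ => ?_).trans
    (setIntegral_ball_diff_ball_comp_sub_eq_zero (μ := volume) hodd x₀ δ ρ)
  simp [fracPLapKernel, norm_sub_rev]

lemma norm_fracPLapKernel_sub_tangent_le {ψ : Rd d → ℝ} {x₀ y : Rd d} {C ρ θ : ℝ}
    (hJ : |Jp p (ψ x₀ - ψ y) - Jp p (-fderiv ℝ ψ x₀ (y - x₀))| ≤ C * ‖y - x₀‖ ^ p)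
    (hC : 0 ≤ C) (hθ : 0 ≤ θ) (hy : 0 < ‖y - x₀‖) (hyρ : ‖y - x₀‖ < ρ) :
    ‖fracPLapKernel d s p ψ x₀ y -
        fracPLapKernel d s p (fun y => ψ x₀ + fderiv ℝ ψ x₀ (y - x₀)) x₀ y‖ ≤
      C * ρ ^ θ * ‖y - x₀‖ ^ (p - kexp d s p - θ) := by
  calc _ = |Jp p (ψ x₀ - ψ y) - Jp p (-fderiv ℝ ψ x₀ (y - x₀))| / ‖y - x₀‖ ^ kexp d s p := by
        simp [fracPLapKernel, ← sub_div, norm_sub_rev x₀,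
          abs_of_nonneg (Real.rpow_nonneg (norm_nonneg _) _)]
    _ ≤ C * ‖y - x₀‖ ^ p / ‖y - x₀‖ ^ kexp d s p := by gcongr
    _ = C * ‖y - x₀‖ ^ θ * ‖y - x₀‖ ^ (p - kexp d s p - θ) := by
        rw [mul_div_assoc, ← Real.rpow_sub hy, mul_assoc, ← Real.rpow_add hy]
        ring_nf
    _ ≤ C * ρ ^ θ * ‖y - x₀‖ ^ (p - kexp d s p - θ) := by gcongr

lemma exists_abs_setIntegral_fracPLapKernel_le (hd : 1 ≤ d) (hs : s < 1) (hp : 2 ≤ p)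
    {ψ : Rd d → ℝ} {x₀ : Rd d} {r : ℝ} (hr : 0 < r) (hψ : ContDiffOn ℝ 2 ψ (ball x₀ r)) :
    ∃ ε ∈ Ioo 0 r, ∃ C, ∀ δ ρ, 0 < δ → δ < ρ → ρ ≤ ε →
      |∫ y in ball x₀ ρ \ ball x₀ δ, fracPLapKernel d s p ψ x₀ y| ≤ C * ρ ^ ((p - s * p) / 2) := by
  obtain ⟨ε₀, hε₀, C, hC0, hC⟩ := exists_abs_jp_sub_jp_fderiv_le hp
    (hψ.contDiffAt (isOpen_ball.mem_nhds (mem_ball_self hr)))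
  set ε := min ε₀ (r / 2)
  have hεr : ε < r := (min_le_right _ _).trans_lt (by linarith)
  -- `p - (d + sp) = θ + e`: the factor `ρ ^ θ` gives the decay, and `e > -d` the integrability.
  set θ := (p - s * p) / 2
  set e := p - kexp d s p - θ
  have hθ : 0 < θ := by simp only [θ]; nlinarith
  have he : -(d : ℝ) < e := by simp only [e, kexp, θ]; nlinarith
  have hT := integrableOn_ball_norm_sub_rpow (μ := volume) (by simpa using hd)
    (by simpa using he) x₀ ε
  refine ⟨ε, ⟨by positivity, hεr⟩, C * ∫ y in ball x₀ ε, ‖y - x₀‖ ^ e,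
    fun δ ρ hδ hδρ hρε => ?_⟩
  set ℓ : Rd d → ℝ := fun y => ψ x₀ + fderiv ℝ ψ x₀ (y - x₀)
  have hmeas : MeasurableSet (ball x₀ ρ \ ball x₀ δ) := measurableSet_ball.diff measurableSet_ball
  have hsub : ball x₀ ρ \ ball x₀ δ ⊆ ball x₀ ε := sdiff_subset.trans (ball_subset_ball hρε)
  have hint := integrableOn_ball_diff_ball_of_continuousOn (μ := volume)
    (continuousOn_fracPLapKernel (s := s) hp
      (hψ.continuousOn.mono (closedBall_subset_ball hεr)) x₀) hδ hρε
  have hintℓ := integrableOn_ball_diff_ball_of_continuousOn (μ := volume)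
    (continuousOn_fracPLapKernel (s := s) hp (show Continuous ℓ by fun_prop).continuousOn x₀) hδ hρε
  have hpt : ∀ y ∈ ball x₀ ρ \ ball x₀ δ, ‖fracPLapKernel d s p ψ x₀ y -
      fracPLapKernel d s p ℓ x₀ y‖ ≤ C * ρ ^ θ * ‖y - x₀‖ ^ e := fun y hy => by
    have hyρ : ‖y - x₀‖ < ρ := by simpa [dist_eq_norm] using hy.1
    exact norm_fracPLapKernel_sub_tangent_le (hC y (mem_closedBall_iff_norm.2
      (hyρ.le.trans (hρε.trans (min_le_left _ _))))) hC0 hθ.le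
      (hδ.trans_le (by simpa [dist_eq_norm] using hy.2)) hyρ
  calc |∫ y in ball x₀ ρ \ ball x₀ δ, fracPLapKernel d s p ψ x₀ y|
      = ‖∫ y in ball x₀ ρ \ ball x₀ δ,
          (fracPLapKernel d s p ψ x₀ y - fracPLapKernel d s p ℓ x₀ y)‖ := by
        rw [integral_sub hint hintℓ, setIntegral_fracPLapKernel_affine_eq_zero, sub_zero,
          Real.norm_eq_abs]
    _ ≤ ∫ y in ball x₀ ρ \ ball x₀ δ, C * ρ ^ θ * ‖y - x₀‖ ^ e :=
        norm_integral_le_of_norm_le (IntegrableOn.mono_set (hT.const_mul _) hsub)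
          (ae_restrict_of_forall_mem hmeas hpt)
    _ ≤ ∫ y in ball x₀ ε, C * ρ ^ θ * ‖y - x₀‖ ^ e :=
        setIntegral_mono_set (hT.const_mul _) (ae_of_all _ fun y =>
          mul_nonneg (mul_nonneg hC0 (Real.rpow_nonneg (hδ.trans hδρ).le _)) (by positivity))
          hsub.eventuallyLE
    _ = (C * ∫ y in ball x₀ ε, ‖y - x₀‖ ^ e) * ρ ^ θ := by
        rw [integral_const_mul]; ring

end Kernel

section Touching

variable {d : ℕ} {s p : ℝ} {w ψ : Rd d → ℝ} {x₀ : Rd d}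

open Classical

lemma fracPLapKernel_piecewise_of_mem {ρ : ℝ} (hρ : 0 < ρ) {y : Rd d}
    (hy : y ∈ ball x₀ ρ) :
    fracPLapKernel d s p ((ball x₀ ρ).piecewise ψ w) x₀ y = fracPLapKernel d s p ψ x₀ y := by
  simp [fracPLapKernel, piecewise_eq_of_mem _ _ _ hy, mem_ball_self hρ]

lemma fracPLapKernel_piecewise_of_notMem (hx₀ : ψ x₀ = w x₀) {ρ : ℝ} (hρ : 0 < ρ) {y : Rd d}
    (hy : y ∉ ball x₀ ρ) :
    fracPLapKernel d s p ((ball x₀ ρ).piecewise ψ w) x₀ y = fracPLapKernel d s p w x₀ y := by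
  simp [fracPLapKernel, piecewise_eq_of_notMem _ _ _ hy, mem_ball_self hρ, hx₀]

lemma piecewise_ball_mono {r : ℝ} (hle : ∀ y ∈ ball x₀ r, w y ≤ ψ y) {ρ' ρ : ℝ} (hρ' : ρ' ≤ ρ)
    (hρ : ρ ≤ r) (y : Rd d) : (ball x₀ ρ').piecewise ψ w y ≤ (ball x₀ ρ).piecewise ψ w y := by
  by_cases hy' : y ∈ ball x₀ ρ'
  · simp [piecewise_eq_of_mem _ _ _ hy', piecewise_eq_of_mem _ _ _ (ball_subset_ball hρ' hy')]
  by_cases hy : y ∈ ball x₀ ρ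
  · simpa [piecewise_eq_of_notMem _ _ _ hy', piecewise_eq_of_mem _ _ _ hy] using
      hle y (ball_subset_ball hρ hy)
  · simp [piecewise_eq_of_notMem _ _ _ hy', piecewise_eq_of_notMem _ _ _ hy]

lemma integrableOn_fracPLapKernel_piecewise (hp : 2 ≤ p) {ε₁ : ℝ}
    (hψ : ContinuousOn ψ (closedBall x₀ ε₁)) (hx₀ : ψ x₀ = w x₀)
    (hw : ∀ ε > 0, IntegrableOn (fracPLapKernel d s p w x₀) (ball x₀ ε)ᶜ)
    {ρ ε : ℝ} (hρ : 0 < ρ) (hρε₁ : ρ ≤ ε₁) (hε : 0 < ε) :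
    IntegrableOn (fracPLapKernel d s p ((ball x₀ ρ).piecewise ψ w) x₀) (ball x₀ ε)ᶜ := by
  have hin : IntegrableOn (fracPLapKernel d s p ((ball x₀ ρ).piecewise ψ w) x₀)
      (ball x₀ ρ \ ball x₀ ε) :=
    (integrableOn_ball_diff_ball_of_continuousOn (continuousOn_fracPLapKernel hp hψ x₀) hε
      hρε₁).congr_fun (fun y hy => (fracPLapKernel_piecewise_of_mem hρ hy.1).symm)
      (measurableSet_ball.diff measurableSet_ball)
  have hout : IntegrableOn (fracPLapKernel d s p ((ball x₀ ρ).piecewise ψ w) x₀) (ball x₀ ρ)ᶜ :=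
    (hw ρ hρ).congr_fun (fun y hy => (fracPLapKernel_piecewise_of_notMem hx₀ hρ hy).symm)
      measurableSet_ball.compl
  refine (hin.union hout).mono_set fun y hy => ?_
  by_cases hyρ : y ∈ ball x₀ ρ
  · exact Or.inl ⟨hyρ, hy⟩
  · exact Or.inr hyρ

lemma setIntegral_fracPLapKernel_piecewise (hx₀ : ψ x₀ = w x₀) {δ ρ : ℝ} (hδ : 0 < δ)
    (hδρ : δ ≤ ρ) (hin : IntegrableOn (fracPLapKernel d s p ψ x₀) (ball x₀ ρ \ ball x₀ δ))
    (hout : IntegrableOn (fracPLapKernel d s p w x₀) (ball x₀ ρ)ᶜ) :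
    ∫ y in (ball x₀ δ)ᶜ, fracPLapKernel d s p ((ball x₀ ρ).piecewise ψ w) x₀ y =
      (∫ y in ball x₀ ρ \ ball x₀ δ, fracPLapKernel d s p ψ x₀ y) +
        ∫ y in (ball x₀ ρ)ᶜ, fracPLapKernel d s p w x₀ y := by
  have hρ := hδ.trans_le hδρ
  have hsplit : (ball x₀ δ)ᶜ = (ball x₀ ρ \ ball x₀ δ) ∪ (ball x₀ ρ)ᶜ := by
    rw [sdiff_eq, inter_union_distrib_right, union_compl_self, univ_inter,
      union_eq_left.2 (compl_subset_compl.2 (ball_subset_ball hδρ))]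
  rw [hsplit, setIntegral_union (disjoint_compl_right.mono_left sdiff_subset)
    measurableSet_ball.compl
    (hin.congr_fun (fun y hy => (fracPLapKernel_piecewise_of_mem hρ hy.1).symm)
      (measurableSet_ball.diff measurableSet_ball))
    (hout.congr_fun (fun y hy => (fracPLapKernel_piecewise_of_notMem hx₀ hρ hy).symm)
      measurableSet_ball.compl),
    setIntegral_congr_fun (measurableSet_ball.diff measurableSet_ball)
      (fun y hy => fracPLapKernel_piecewise_of_mem hρ hy.1),
    setIntegral_congr_fun measurableSet_ball.compl
      (fun y hy => fracPLapKernel_piecewise_of_notMem hx₀ hρ hy)]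

lemma exists_hasFracPLap_le_of_not_integrableOn {r B ε₀ : ℝ} (hr : 0 < r) (hx₀ : ψ x₀ = w x₀)
    (hB : ∀ ρ ∈ Ioc 0 r, ∃ L, HasFracPLap d s p ((ball x₀ ρ).piecewise ψ w) x₀ L ∧ L ≤ B)
    (hε₀ : 0 < ε₀) (hw : ¬IntegrableOn (fracPLapKernel d s p w x₀) (ball x₀ ε₀)ᶜ) :
    ∃ L, HasFracPLap d s p w x₀ L ∧ L ≤ B := by
  -- The Bochner integrals defining both principal values take their junk value `0` here.
  have hρ : 0 < min ε₀ r := lt_min hε₀ hr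
  obtain ⟨L, hL, hLB⟩ := hB (min ε₀ r) ⟨hρ, min_le_right _ _⟩
  have hwρ : ¬IntegrableOn (fracPLapKernel d s p ((ball x₀ (min ε₀ r)).piecewise ψ w) x₀)
      (ball x₀ ε₀)ᶜ := fun h => hw <| h.congr_fun (fun y hy => fracPLapKernel_piecewise_of_notMem
        hx₀ hρ fun hy' => hy (ball_subset_ball (min_le_left _ _) hy')) measurableSet_ball.compl
  refine ⟨0, hasFracPLap_zero_of_not_integrableOn hε₀ hw, ?_⟩
  rwa [hL.unique (hasFracPLap_zero_of_not_integrableOn hε₀ hwρ)] at hLB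

lemma exists_hasFracPLap_le_of_integrableOn (hd : 1 ≤ d) (hs : s < 1) (hp : 2 ≤ p) {r B : ℝ}
    (hr : 0 < r) (hψ : ContDiffOn ℝ 2 ψ (ball x₀ r)) (hx₀ : ψ x₀ = w x₀)
    (hle : ∀ y ∈ ball x₀ r, w y ≤ ψ y)
    (hB : ∀ ρ ∈ Ioc 0 r, ∃ L, HasFracPLap d s p ((ball x₀ ρ).piecewise ψ w) x₀ L ∧ L ≤ B)
    (hw : ∀ ε > 0, IntegrableOn (fracPLapKernel d s p w x₀) (ball x₀ ε)ᶜ) :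
    ∃ L, HasFracPLap d s p w x₀ L ∧ L ≤ B := by
  obtain ⟨ε, ⟨hε, hεr⟩, C, hC⟩ := exists_abs_setIntegral_fracPLapKernel_le hd hs hp hr hψ
  have hψc : ContinuousOn ψ (closedBall x₀ ε) := hψ.continuousOn.mono (closedBall_subset_ball hεr)
  choose! Λ hΛ hΛB using hB
  have hΛ' : ∀ ρ ∈ Ioo 0 ε, Tendsto (fun δ => ∫ y in (ball x₀ δ)ᶜ,
      fracPLapKernel d s p ((ball x₀ ρ).piecewise ψ w) x₀ y) (𝓝[>] 0) (𝓝 (Λ ρ)) :=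
    fun ρ hρ => hasFracPLap_iff.1 (hΛ ρ ⟨hρ.1, hρ.2.le.trans hεr.le⟩)
  have hanti : AntitoneOn Λ (Ioo 0 ε) := by
    intro ρ' hρ' ρ hρ hρ'ρ
    refine le_of_tendsto_of_tendsto (hΛ' ρ hρ) (hΛ' ρ' hρ') ?_
    filter_upwards [self_mem_nhdsWithin] with δ hδ
    refine setIntegral_mono_on
      (integrableOn_fracPLapKernel_piecewise hp hψc hx₀ hw hρ.1 hρ.2.le hδ)
      (integrableOn_fracPLapKernel_piecewise hp hψc hx₀ hw hρ'.1 hρ'.2.le hδ)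
      measurableSet_ball.compl fun y _ => fracPLapKernel_le_of_le hp ?_
      (piecewise_ball_mono hle hρ'ρ (hρ.2.le.trans hεr.le) y)
    simp [mem_ball_self hρ.1, mem_ball_self hρ'.1]
  have hclose : ∀ ρ ∈ Ioo 0 ε, |Λ ρ - ∫ y in (ball x₀ ρ)ᶜ, fracPLapKernel d s p w x₀ y| ≤
      C * ρ ^ ((p - s * p) / 2) := by
    intro ρ hρ
    refine le_of_tendsto ((hΛ' ρ hρ).sub_const _).abs ?_
    filter_upwards [Ioo_mem_nhdsGT hρ.1] with δ hδ
    rw [setIntegral_fracPLapKernel_piecewise hx₀ hδ.1 hδ.2.le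
      (integrableOn_ball_diff_ball_of_continuousOn (continuousOn_fracPLapKernel hp hψc x₀) hδ.1
        hρ.2.le)
      (hw ρ hρ.1), add_sub_cancel_right]
    exact hC δ ρ hδ.1 hδ.2 hρ.2.le
  have hθ : 0 < (p - s * p) / 2 := by nlinarith
  have hm : Tendsto (fun ρ : ℝ => C * ρ ^ ((p - s * p) / 2)) (𝓝[>] 0) (𝓝 0) := by
    simpa [Real.zero_rpow hθ.ne'] using
      (((Real.continuous_rpow_const hθ.le).tendsto 0).const_mul C).mono_left nhdsWithin_le_nhds
  obtain ⟨L, hLB, hL⟩ := exists_tendsto_le_of_antitoneOn hε hanti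
    (fun ρ hρ => hΛB ρ ⟨hρ.1, hρ.2.le.trans hεr.le⟩) hm hclose
  exact ⟨L, hasFracPLap_iff.2 hL, hLB⟩

theorem exists_hasFracPLap_le_of_touch (hd : 1 ≤ d) (hs : s < 1) (hp : 2 ≤ p) {r B : ℝ}
    (hr : 0 < r) (hψ : ContDiffOn ℝ 2 ψ (ball x₀ r)) (hx₀ : ψ x₀ = w x₀)
    (hle : ∀ y ∈ ball x₀ r, w y ≤ ψ y)
    (hB : ∀ ρ ∈ Ioc 0 r, ∃ L, HasFracPLap d s p ((ball x₀ ρ).piecewise ψ w) x₀ L ∧ L ≤ B) :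
    ∃ L, HasFracPLap d s p w x₀ L ∧ L ≤ B := by
  by_cases hw : ∀ ε > 0, IntegrableOn (fracPLapKernel d s p w x₀) (ball x₀ ε)ᶜ
  · exact exists_hasFracPLap_le_of_integrableOn hd hs hp hr hψ hx₀ hle hB hw
  · obtain ⟨ε₀, hε₀, hw⟩ := not_forall₂.1 hw
    exact exists_hasFracPLap_le_of_not_integrableOn hr hx₀ hB hε₀ hw

end Touching

section Viscosity

variable {d : ℕ} {s p : ℝ} {u φ : Rd d → ℝ → ℝ} {x₀ : Rd d} {t₀ r : ℝ}

open Classical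

lemma pCyl_mono {ρ : ℝ} (hρ : 0 < ρ) (hρr : ρ ≤ r) : pCyl d x₀ t₀ ρ ⊆ pCyl d x₀ t₀ r :=
  prod_mono (ball_subset_ball hρr) (Ioc_subset_Ioc_left (by nlinarith))

lemma mk_mem_pCyl {y : Rd d} (hr : 0 < r) (hy : y ∈ ball x₀ r) : (y, t₀) ∈ pCyl d x₀ t₀ r :=
  ⟨hy, sub_lt_self _ (by positivity), le_rfl⟩

lemma glue_apply_self (hr : 0 < r) (y : Rd d) :
    glue d u φ x₀ t₀ r y t₀ = (ball x₀ r).piecewise (φ · t₀) (u · t₀) y := by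
  by_cases hy : y ∈ ball x₀ r
  · simp [glue, piecewise_eq_of_mem _ _ _ hy, mk_mem_pCyl hr hy]
  · simp [glue, pCyl, hy]

lemma glue_neg : glue d (-u) φ x₀ t₀ r = -glue d u (-φ) x₀ t₀ r := by
  ext x t
  by_cases h : (x, t) ∈ pCyl d x₀ t₀ r <;> simp [glue, h]

lemma TouchesFromAbove.mono (h : TouchesFromAbove d u φ x₀ t₀ r) {ρ : ℝ} (hρ : 0 < ρ)
    (hρr : ρ ≤ r) : TouchesFromAbove d u φ x₀ t₀ ρ :=
  ⟨h.smooth.mono (pCyl_mono hρ hρr), h.touch_eq, fun q hq => h.touch_le q (pCyl_mono hρ hρr hq)⟩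

lemma TouchesFromAbove.neg (h : TouchesFromAbove d u φ x₀ t₀ r) :
    TouchesFromBelow d (-u) (-φ) x₀ t₀ r :=
  ⟨h.smooth.neg, by simp [h.touch_eq], fun q hq => by simpa using h.touch_le q hq⟩

lemma TouchesFromBelow.neg (h : TouchesFromBelow d u φ x₀ t₀ r) :
    TouchesFromAbove d (-u) (-φ) x₀ t₀ r :=
  ⟨h.smooth.neg, by simp [h.touch_eq], fun q hq => by simpa using h.touch_ge q hq⟩

lemma tailKer_neg (w : Rd d → ℝ) : tailKer d s p (fun x => -w x) = tailKer d s p w := by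
  ext x; simp [tailKer]

lemma IsViscositySupersol.neg {Ω : Set (Rd d)} {t₁ t₂ : ℝ}
    (h : IsViscositySupersol d s p u Ω t₁ t₂) : IsViscositySubsol d s p (-u) Ω t₁ t₂ := by
  obtain ⟨hlsc, htail, htouch⟩ := h
  refine ⟨fun q hq y hy => ?_, fun τ₁ τ₂ h₁ h₂ => ?_, fun x₀ t₀ r hr hQ φ hφ => ?_⟩
  · exact (hlsc q hq (-y) (neg_lt.1 hy)).mono fun q' h => neg_lt.1 h
  · obtain ⟨M, hM⟩ := htail τ₁ τ₂ h₁ h₂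
    refine ⟨M, fun t ht => ?_⟩
    simpa [MemTailSpace, tailNorm, ← tailKer_neg (fun x => u x t)] using hM t ht
  · obtain ⟨L, hL, hDL⟩ := htouch x₀ t₀ r hr hQ (-φ) (by simpa using hφ.neg)
    refine ⟨-L, ?_, ?_⟩
    · simpa [glue_neg] using hL.neg
    · have hneg : derivWithin (fun τ => -φ x₀ τ) (Iic t₀) t₀ =
          -derivWithin (fun τ => φ x₀ τ) (Iic t₀) t₀ := derivWithin.neg
      simp only [Pi.neg_apply] at hDL
      linarith

lemma IsViscositySubsol.exists_hasFracPLap (hd : 1 ≤ d) (hs : s < 1) (hp : 2 ≤ p)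
    {Ω : Set (Rd d)} {t₁ t₂ : ℝ} (hu : IsViscositySubsol d s p u Ω t₁ t₂) (hr : 0 < r)
    (hQ : pCyl d x₀ t₀ r ⊆ Ω ×ˢ Ioc t₁ t₂) (hφ : TouchesFromAbove d u φ x₀ t₀ r) :
    ∃ L, HasFracPLap d s p (fun x => u x t₀) x₀ L ∧
      derivWithin (fun τ => φ x₀ τ) (Iic t₀) t₀ + L ≤ 0 := by
  have hψ : ContDiffOn ℝ 2 (φ · t₀) (ball x₀ r) :=
    hφ.smooth.comp (contDiff_id.prodMk contDiff_const).contDiffOn fun y hy => mk_mem_pCyl hr hy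
  obtain ⟨L, hL, hLB⟩ := exists_hasFracPLap_le_of_touch (B := -derivWithin (φ x₀ ·) (Iic t₀) t₀)
    hd hs hp hr hψ hφ.touch_eq (fun y hy => hφ.touch_le _ (mk_mem_pCyl hr hy)) fun ρ hρ => by
      obtain ⟨L, hL, hDL⟩ := hu.2.2 x₀ t₀ ρ hρ.1 ((pCyl_mono hρ.1 hρ.2).trans hQ) φ
        (hφ.mono hρ.1 hρ.2)
      exact ⟨L, by simpa only [glue_apply_self hρ.1] using hL, by linarith⟩
  exact ⟨L, hL, by linarith⟩

end Viscosity

theorem statement4_general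
    (d : ℕ) (hd : 1 ≤ d) (s p : ℝ) (hs : s ∈ Ioo (0:ℝ) 1) (hp : 2 ≤ p)
    (Ω : Set (Rd d))
    (t₁ t₂ : ℝ) (u φ : Rd d → ℝ → ℝ)
    (x₀ : Rd d) (t₀ r : ℝ) (hr : 0 < r)
    (hQ : pCyl d x₀ t₀ r ⊆ Ω ×ˢ Ioc t₁ t₂) :
    (IsViscositySubsol d s p u Ω t₁ t₂ → TouchesFromAbove d u φ x₀ t₀ r →
      ∃ L : ℝ, HasFracPLap d s p (fun x => u x t₀) x₀ L ∧
        derivWithin (fun τ => φ x₀ τ) (Iic t₀) t₀ + L ≤ 0) ∧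
    (IsViscositySupersol d s p u Ω t₁ t₂ → TouchesFromBelow d u φ x₀ t₀ r →
      ∃ L : ℝ, HasFracPLap d s p (fun x => u x t₀) x₀ L ∧
        0 ≤ derivWithin (fun τ => φ x₀ τ) (Iic t₀) t₀ + L) := by
  refine ⟨fun hu hφ => hu.exists_hasFracPLap hd hs.2 hp hr hQ hφ, fun hu hφ => ?_⟩
  obtain ⟨L, hL, hDL⟩ := hu.neg.exists_hasFracPLap hd hs.2 hp hr hQ hφ.neg
  refine ⟨-L, by simpa using hL.neg, ?_⟩
  have hneg : derivWithin (fun τ => -φ x₀ τ) (Iic t₀) t₀ =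
      -derivWithin (fun τ => φ x₀ τ) (Iic t₀) t₀ := derivWithin.neg
  simp only [Pi.neg_apply] at hDL
  linarith

/-- At a touching point the equation can be evaluated with `u` itself
in the nonlocal term. -/
theorem statement4
    (d : ℕ) (hd : 1 ≤ d) (s p : ℝ) (hs : s ∈ Ioo (0:ℝ) 1) (hp : 2 ≤ p)
    (Ω : Set (Rd d)) (hΩo : IsOpen Ω) (hΩb : Bornology.IsBounded Ω)
    (t₁ t₂ : ℝ) (u φ : Rd d → ℝ → ℝ)
    (x₀ : Rd d) (t₀ r : ℝ) (hr : 0 < r)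
    (hQ : pCyl d x₀ t₀ r ⊆ Ω ×ˢ Ioc t₁ t₂) :
    (IsViscositySubsol d s p u Ω t₁ t₂ → TouchesFromAbove d u φ x₀ t₀ r →
      ∃ L : ℝ, HasFracPLap d s p (fun x => u x t₀) x₀ L ∧
        derivWithin (fun τ => φ x₀ τ) (Iic t₀) t₀ + L ≤ 0) ∧
    (IsViscositySupersol d s p u Ω t₁ t₂ → TouchesFromBelow d u φ x₀ t₀ r →
      ∃ L : ℝ, HasFracPLap d s p (fun x => u x t₀) x₀ L ∧
        0 ≤ derivWithin (fun τ => φ x₀ τ) (Iic t₀) t₀ + L) :=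
  statement4_general d hd s p hs hp Ω t₁ t₂ u φ x₀ t₀ r hr hQ

end
end

section
/- Let p > 1 and let J_p(τ) := |τ|^{p−2}τ. Then for all a, b ∈ ℝ: (i) J_p(a) − J_p(b) = (p−1) ∫₀¹ |b + τ(a−b)|^{p−2} (a−b) dτ; and (ii) there exists a constant C_p > 0, depending only on p, such that (1/C_p)(|b| + |a−b|)^{p−2} ≤ ∫₀¹ |b + τ(a−b)|^{p−2} dτ ≤ C_p (|b| + |a−b|)^{p−2}. -/
open MeasureTheory Real Set Filter Topology

noncomputable section

/-!
Away from `0`, `J_p` is differentiable with `J_p' = (p - 1) |x| ^ (p - 2)`, which is locally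
integrable because `p - 2 > -1`; so (i) is the fundamental theorem of calculus with one exceptional
point, after the substitution `x = b + τ (a - b)`.

For (ii), the mean `S(a, b)` of `|x| ^ (p - 2)` over the segment from `b` to `a` is symmetric and
`(p - 2)`-homogeneous, so it suffices to bound `S(1, t)` for `|t| ≤ 1`. By (i),
`(p - 1) (1 - t) S(1, t) = 1 - J_p(t)`, which lies between `1` and `2` for `t ≤ 0` and equals
`1 - t ^ (p - 1)`, comparable to `1 - t` by Bernoulli's inequality, for `t ≥ 0`. Finally
`|b| + |a - b|` lies between `max |a| |b|` and three times it.
-/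
theorem intervalIntegrable_abs_rpow {r : ℝ} (hr : -1 < r) (a b : ℝ) :
    IntervalIntegrable (fun x : ℝ => |x| ^ r) volume a b := by
  have h : LocallyIntegrable (fun x : ℝ => |x| ^ r) volume :=
    locallyIntegrable_of_norm_le_rpow (C := 1) (α := -r) (by simp) (by simpa using neg_lt.mp hr)
      (Eventually.of_forall fun x => by simp [abs_rpow_of_nonneg (abs_nonneg x)])
      (continuous_abs.measurable.pow_const r).aestronglyMeasurable
  exact (h.integrableOn_isCompact isCompact_uIcc).intervalIntegrable

theorem hasDerivAt_Jp (p : ℝ) {x : ℝ} (hx : x ≠ 0) :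
    HasDerivAt (Jp p) ((p - 1) * |x| ^ (p - 2)) x := by
  have hx' : |x| ≠ 0 := abs_ne_zero.mpr hx
  have h : HasDerivAt (fun y => |y| ^ (p - 2) * y)
      (SignType.sign x * (p - 2) * |x| ^ (p - 2 - 1) * x + |x| ^ (p - 2) * 1) x :=
    ((hasDerivAt_abs hx).rpow_const (Or.inl hx')).mul (hasDerivAt_id' x)
  show HasDerivAt (fun y => |y| ^ (p - 2) * y) _ x
  convert h using 1
  have hsx : (SignType.sign x : ℝ) * x = |x| := by
    rcases hx.lt_or_gt with h | h <;> simp [h, abs_of_neg, abs_of_pos]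
  calc (p - 1) * |x| ^ (p - 2) = (p - 2) * (|x| ^ (p - 2 - 1) * |x|) + |x| ^ (p - 2) := by
        rw [← rpow_add_one hx', sub_add_cancel]; ring
    _ = _ := by rw [← hsx]; ring

theorem abs_Jp {p : ℝ} (hp : p ≠ 1) (x : ℝ) : |Jp p x| = |x| ^ (p - 1) := by
  rcases eq_or_ne x 0 with rfl | hx
  · simp [Jp, zero_rpow (sub_ne_zero.mpr hp)]
  · rw [Jp, abs_mul, abs_of_nonneg (rpow_nonneg (abs_nonneg x) _),
      show p - 1 = p - 2 + 1 by ring, rpow_add_one (abs_ne_zero.mpr hx)]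

theorem continuous_Jp {p : ℝ} (hp : 1 < p) : Continuous (Jp p) := by
  refine continuous_iff_continuousAt.mpr fun x => ?_
  rcases eq_or_ne x 0 with rfl | hx
  · have h0 : Jp p 0 = 0 := by simp [Jp]
    rw [ContinuousAt, h0, tendsto_zero_iff_abs_tendsto_zero,
      show abs ∘ Jp p = fun x => |x| ^ (p - 1) from funext (abs_Jp hp.ne')]
    have hc : Continuous fun x : ℝ => |x| ^ (p - 1) :=
      continuous_abs.rpow_const fun _ => Or.inr (by linarith)
    simpa [zero_rpow (by linarith : p - 1 ≠ 0)] using hc.tendsto 0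
  · exact (hasDerivAt_Jp p hx).continuousAt

theorem integral_abs_rpow_eq_Jp_sub {p : ℝ} (hp : 1 < p) (a b : ℝ) :
    ∫ x in b..a, (p - 1) * |x| ^ (p - 2) = Jp p a - Jp p b :=
  integral_eq_of_hasDerivAt_off_countable _ _ (countable_singleton 0)
    (continuous_Jp hp).continuousOn (fun x hx => hasDerivAt_Jp p hx.2)
    ((intervalIntegrable_abs_rpow (by linarith) b a).const_mul _)

theorem Jp_sub_Jp_eq_integral {p : ℝ} (hp : 1 < p) (a b : ℝ) :
    Jp p a - Jp p b = (p - 1) * ∫ τ in (0:ℝ)..1, |b + τ * (a - b)| ^ (p - 2) * (a - b) := by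
  have hsub := intervalIntegral.smul_integral_comp_mul_add (a := 0) (b := 1)
    (fun x : ℝ => |x| ^ (p - 2)) (a - b) b
  simp only [mul_zero, zero_add, mul_one, sub_add_cancel, smul_eq_mul] at hsub
  rw [← integral_abs_rpow_eq_Jp_sub hp, intervalIntegral.integral_const_mul, ← hsub,
    ← intervalIntegral.integral_const_mul]
  congr 1
  refine intervalIntegral.integral_congr fun τ _ => ?_
  ring_nf

def segmentAvg (p a b : ℝ) : ℝ := ∫ τ in (0:ℝ)..1, |b + τ * (a - b)| ^ (p - 2)

theorem sub_mul_segmentAvg {p : ℝ} (hp : 1 < p) (a b : ℝ) :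
    (p - 1) * ((a - b) * segmentAvg p a b) = Jp p a - Jp p b := by
  rw [Jp_sub_Jp_eq_integral hp, segmentAvg, intervalIntegral.integral_mul_const, mul_comm (a - b)]

theorem segmentAvg_comm (p a b : ℝ) : segmentAvg p a b = segmentAvg p b a := by
  have h := intervalIntegral.integral_comp_sub_left (a := 0) (b := 1)
    (fun τ : ℝ => |a + τ * (b - a)| ^ (p - 2)) 1
  simp only [sub_zero, sub_self] at h
  rw [segmentAvg, segmentAvg, ← h]
  refine intervalIntegral.integral_congr fun τ _ => ?_
  ring_nf

theorem segmentAvg_self (p b : ℝ) : segmentAvg p b b = |b| ^ (p - 2) := by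
  simp [segmentAvg]

theorem segmentAvg_eq_rpow_mul {a : ℝ} (ha : a ≠ 0) (p b : ℝ) :
    segmentAvg p a b = |a| ^ (p - 2) * segmentAvg p 1 (b / a) := by
  rw [segmentAvg, segmentAvg, ← intervalIntegral.integral_const_mul]
  refine intervalIntegral.integral_congr fun τ _ => ?_
  rw [← mul_rpow (abs_nonneg a) (abs_nonneg _), ← abs_mul]
  congr 2
  field_simp

theorem one_sub_rpow_bounds {q t : ℝ} (hq : 0 < q) (ht0 : 0 ≤ t) (ht1 : t ≤ 1) :
    min 1 q * (1 - t) ≤ 1 - t ^ q ∧ 1 - t ^ q ≤ max 1 q * (1 - t) := by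
  have ht : -1 ≤ t - 1 := by linarith
  rcases le_total 1 q with h | h
  · have hbern := one_add_mul_self_le_rpow_one_add ht h
    rw [add_sub_cancel] at hbern
    have := rpow_le_self_of_le_one ht0 ht1 h
    rw [min_eq_left h, max_eq_right h]
    constructor <;> linarith
  · have hbern := rpow_one_add_le_one_add_mul_self ht hq.le h
    rw [add_sub_cancel] at hbern
    have := self_le_rpow_of_le_one ht0 ht1 h
    rw [min_eq_right h, max_eq_left h]
    constructor <;> linarith

theorem one_sub_Jp_bounds {p t : ℝ} (hp : 1 < p) (ht : |t| ≤ 1) :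
    min (1 / 2) (p - 1) * (1 - t) ≤ 1 - Jp p t ∧ 1 - Jp p t ≤ 2 * p * (1 - t) := by
  have hp1 : 0 < p - 1 := by linarith
  obtain ⟨htm, ht1⟩ := abs_le.mp ht
  have hJt := abs_Jp hp.ne' t
  rcases le_total t 0 with ht0 | ht0
  · have hJ : Jp p t = -|t| ^ (p - 1) := by
      have hneg : Jp p t ≤ 0 := mul_nonpos_of_nonneg_of_nonpos (by positivity) ht0
      rw [← hJt, abs_of_nonpos hneg, neg_neg]
    have hpow : |t| ^ (p - 1) ≤ 1 := rpow_le_one (abs_nonneg t) ht hp1.le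
    have hpow0 : 0 ≤ |t| ^ (p - 1) := by positivity
    rw [hJ]
    constructor
    · nlinarith [min_le_left (1 / 2 : ℝ) (p - 1)]
    · nlinarith
  · have hJ : Jp p t = t ^ (p - 1) := by
      have hpos : 0 ≤ Jp p t := mul_nonneg (by positivity) ht0
      rw [← abs_of_nonneg hpos, hJt, abs_of_nonneg ht0]
    obtain ⟨hmin, hmax⟩ := one_sub_rpow_bounds hp1 ht0 ht1
    rw [hJ]
    constructor
    · exact le_trans (by gcongr; norm_num) hmin
    · exact hmax.trans (by gcongr; exact max_le (by linarith) (by linarith))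

theorem segmentAvg_one_bounds {p t : ℝ} (hp : 1 < p) (ht : |t| ≤ 1) :
    1 / (2 * p) ≤ segmentAvg p 1 t ∧ segmentAvg p 1 t ≤ 2 * p / (p - 1) := by
  have hp1 : 0 < p - 1 := by linarith
  rcases (abs_le.mp ht).2.eq_or_lt with rfl | ht1
  · rw [segmentAvg_self, abs_one, one_rpow]
    constructor
    · rw [div_le_one (by linarith)]; linarith
    · rw [le_div_iff₀ hp1]; linarith
  have hX : (p - 1) * segmentAvg p 1 t * (1 - t) = 1 - Jp p t := by
    have h := sub_mul_segmentAvg hp 1 t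
    rw [show Jp p 1 = 1 by simp [Jp]] at h
    rw [← h]; ring
  obtain ⟨hlo, hhi⟩ := one_sub_Jp_bounds hp ht
  rw [← hX] at hlo hhi
  have h1t : 0 < 1 - t := by linarith
  have hmin : (p - 1) * (1 / (2 * p)) ≤ min (1 / 2) (p - 1) := by
    rw [le_min_iff, mul_one_div, div_le_iff₀ (by linarith)]
    exact ⟨by linarith, mul_le_of_le_one_right hp1.le (inv_le_one_of_one_le₀ (by linarith))⟩
  constructor
  · exact le_of_mul_le_mul_left (hmin.trans (le_of_mul_le_mul_right hlo h1t)) hp1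
  · rw [le_div_iff₀ hp1, mul_comm]
    exact le_of_mul_le_mul_right hhi h1t

theorem rpow_le_mul_rpow_of_le_mul {x y c : ℝ} (r : ℝ) (hx : 0 < x) (hy : 0 < y)
    (hxy : x ≤ c * y) (hyx : y ≤ c * x) : x ^ r ≤ c ^ |r| * y ^ r := by
  have hc : 0 < c := pos_of_mul_pos_left (hx.trans_le hxy) hy.le
  rcases le_total 0 r with hr | hr
  · rw [abs_of_nonneg hr, ← mul_rpow hc.le hy.le]
    exact rpow_le_rpow hx.le hxy hr
  · rw [abs_of_nonpos hr, rpow_neg hc.le, ← div_eq_inv_mul, ← div_rpow hy.le hc.le]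
    exact rpow_le_rpow_of_nonpos (by positivity) (div_le_of_le_mul₀ hc.le hx.le (by linarith)) hr

theorem exists_segmentAvg_eq_rpow_mul (p : ℝ) {a b : ℝ} (hab : a ≠ 0 ∨ b ≠ 0) :
    ∃ m t : ℝ, 0 < m ∧ |t| ≤ 1 ∧ m ≤ |b| + |a - b| ∧ |b| + |a - b| ≤ 3 * m ∧
      segmentAvg p a b = m ^ (p - 2) * segmentAvg p 1 t := by
  have htri : |a| ≤ |b| + |a - b| := by linarith [abs_sub_abs_le_abs_sub a b]
  have htri' : |a - b| ≤ |a| + |b| := abs_sub _ _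
  rcases le_total |b| |a| with h | h
  · have ha : a ≠ 0 := fun ha => by simp_all
    refine ⟨|a|, b / a, abs_pos.mpr ha, ?_, htri, by linarith, segmentAvg_eq_rpow_mul ha p b⟩
    rw [abs_div]; exact div_le_one_of_le₀ h (abs_nonneg a)
  · have hb : b ≠ 0 := fun hb => by simp_all
    refine ⟨|b|, a / b, abs_pos.mpr hb, ?_, by linarith [abs_nonneg (a - b)], by linarith, ?_⟩
    · rw [abs_div]; exact div_le_one_of_le₀ h (abs_nonneg b)
    · rw [segmentAvg_comm, segmentAvg_eq_rpow_mul hb p a]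

theorem exists_segmentAvg_bounds {p : ℝ} (hp : 1 < p) : ∃ C : ℝ, 0 < C ∧ ∀ a b : ℝ,
    1 / C * (|b| + |a - b|) ^ (p - 2) ≤ segmentAvg p a b ∧
      segmentAvg p a b ≤ C * (|b| + |a - b|) ^ (p - 2) := by
  have hp1 : 0 < p - 1 := by linarith
  set K := 2 * p ^ 2 / (p - 1)
  have hK : 2 * p / (p - 1) ≤ K := div_le_div_of_nonneg_right (by nlinarith) hp1.le
  have hK' : K⁻¹ ≤ 1 / (2 * p) := by
    rw [inv_div, div_le_div_iff₀ (by positivity) (by positivity)]; nlinarith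
  have h3 : 1 ≤ (3 : ℝ) ^ |p - 2| := one_le_rpow (by norm_num) (abs_nonneg _)
  have hC : 1 ≤ K * 3 ^ |p - 2| :=
    one_le_mul_of_one_le_of_one_le ((le_div_iff₀ hp1).mpr (by nlinarith) |>.trans hK) h3
  refine ⟨K * 3 ^ |p - 2|, by linarith, fun a b => ?_⟩
  by_cases hab : a = 0 ∧ b = 0
  · obtain ⟨rfl, rfl⟩ := hab
    have h0 : (0 : ℝ) ≤ 0 ^ (p - 2) := rpow_nonneg le_rfl _
    simp only [segmentAvg_self, sub_zero, abs_zero, add_zero]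
    exact ⟨mul_le_of_le_one_left h0 (div_le_one_of_le₀ hC (by linarith)), le_mul_of_one_le_left h0 hC⟩
  obtain ⟨m, t, hm, ht, hmM, hMm, heq⟩ := exists_segmentAvg_eq_rpow_mul p (not_and_or.mp hab)
  obtain ⟨hlo, hhi⟩ := segmentAvg_one_bounds hp ht
  have hM : 0 < |b| + |a - b| := hm.trans_le hmM
  have hMm' := rpow_le_mul_rpow_of_le_mul (p - 2) hM hm hMm (by linarith)
  have hmM' := rpow_le_mul_rpow_of_le_mul (p - 2) hm hM (by linarith) hMm
  rw [heq]
  constructor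
  · calc 1 / (K * 3 ^ |p - 2|) * (|b| + |a - b|) ^ (p - 2)
        ≤ 1 / (K * 3 ^ |p - 2|) * (3 ^ |p - 2| * m ^ (p - 2)) := by gcongr
      _ = K⁻¹ * m ^ (p - 2) := by field_simp
      _ ≤ m ^ (p - 2) * segmentAvg p 1 t := by
        rw [mul_comm]; gcongr; exact hK'.trans hlo
  · calc m ^ (p - 2) * segmentAvg p 1 t ≤ 3 ^ |p - 2| * (|b| + |a - b|) ^ (p - 2) * K :=
        mul_le_mul hmM' (hhi.trans hK) ((by positivity : (0 : ℝ) ≤ 1 / (2 * p)).trans hlo)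
          (by positivity)
      _ = K * 3 ^ |p - 2| * (|b| + |a - b|) ^ (p - 2) := by ring

/-- Integral representation and two-sided bounds for `J_p`. -/
theorem statement13 (p : ℝ) (hp : 1 < p) :
    (∀ a b : ℝ, Jp p a - Jp p b =
      (p - 1) * ∫ τ in (0:ℝ)..1, |b + τ * (a - b)| ^ (p - 2) * (a - b)) ∧
    (∃ C : ℝ, 0 < C ∧ ∀ a b : ℝ,
      (1 / C) * (|b| + |a - b|) ^ (p - 2) ≤ (∫ τ in (0:ℝ)..1, |b + τ * (a - b)| ^ (p - 2)) ∧
      (∫ τ in (0:ℝ)..1, |b + τ * (a - b)| ^ (p - 2)) ≤ C * (|b| + |a - b|) ^ (p - 2)) :=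
  ⟨Jp_sub_Jp_eq_integral hp, exists_segmentAvg_bounds hp⟩

end
end

section
/- Let d ≥ 1, s ∈ (0,1), 2 ≤ p. Let u be a viscosity solution of ∂_t u + (−Δ_p)^s u = 0 in Q₁ satisfying the normalization ‖u‖_{L^∞(Q₁)} + sup_{t∈(−1,0]} ‖u(·,t)‖_{L^{p−1}_{sp}(ℝ^d)} ≤ 1 and the spatial Hölder bound sup_{x,y∈B₁, x≠y} |u(x,t)−u(y,t)|/|x−y|^κ ≤ C(κ) for all t ∈ (−1,0], for some κ ∈ (0,1). Let L, L₂ > 0, β* > 0, let ψ : ℝ^d → [0,∞), let ω be a nonnegative modulus, and suppose the function Φ(x,y,t) := u(x,t) − u(y,t) − L ω(|x−y|) − L₂ ψ(x) − L₂ (−t)^{1+β*} attains a positive supremum over B̄₁ × B̄₁ × [−1,0] at an interior point (x̄, ȳ, t̄) with t̄ < 0, at which the quantity I := (−Δ_p)^s u(x̄, t̄) − (−Δ_p)^s u(ȳ, t̄) is well defined and satisfies I ≤ L₂ (1+β*)(−t̄)^{β*}. Then I ≤ C |x̄ − ȳ|^{κβ*/(1+β*)}, where C > 0 depends only on L₂,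 β*, κ, C(κ), d, p and s. -/
open MeasureTheory Real Set Filter Topology

noncomputable section

/-!
At the maximum point the penalized difference is positive, so the time penalty is dominated by
the oscillation of `u`: `L₂ (-t̄)^{1+β*} < u(x̄,t̄) - u(ȳ,t̄) ≤ C(κ) |x̄ - ȳ|^κ`. Raising this to the
power `β*/(1+β*)` bounds `(-t̄)^{β*}`, hence the assumed bound `L₂ (1+β*) (-t̄)^{β*}` on `I`, by a
multiple of `|x̄ - ȳ|^{κβ*/(1+β*)}`.
-/

lemma rpow_le_of_rpow_one_add_le {τ A r κ β : ℝ} (hτ : 0 ≤ τ) (hA : 0 ≤ A) (hr : 0 ≤ r)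
    (hβ : 0 < β) (h : τ ^ (1 + β) ≤ A * r ^ κ) :
    τ ^ β ≤ A ^ (β / (1 + β)) * r ^ (κ * β / (1 + β)) := by
  have h1β : 1 + β ≠ 0 := by linarith
  calc τ ^ β = (τ ^ (1 + β)) ^ (β / (1 + β)) := by
        rw [← rpow_mul hτ, mul_div_cancel₀ _ h1β]
    _ ≤ (A * r ^ κ) ^ (β / (1 + β)) := by gcongr
    _ = A ^ (β / (1 + β)) * r ^ (κ * β / (1 + β)) := by
        rw [mul_rpow hA (by positivity), ← rpow_mul hr, mul_div_assoc]

theorem statement17_general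
    (d : ℕ) (s p : ℝ)
    (κ Cκ L₂ βs : ℝ) (hCκ : 0 < Cκ) (hL₂ : 0 < L₂) (hβ : 0 < βs) :
    ∃ C : ℝ, 0 < C ∧
    ∀ u : Rd d → ℝ → ℝ,
      IsViscositySol d s p u (Metric.ball (0 : Rd d) 1) (-1) 0 →
      -- normalization
      (∃ M₁ M₂ : ℝ, (∀ q ∈ pCyl d (0 : Rd d) 0 1, |u q.1 q.2| ≤ M₁) ∧
        (∀ t ∈ Ioc (-1:ℝ) 0, MemTailSpace d s p (fun x => u x t) ∧
          tailNorm d s p (fun x => u x t) ≤ M₂) ∧ M₁ + M₂ ≤ 1) →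
      -- spatial Hölder bound
      (∀ t ∈ Ioc (-1:ℝ) 0, ∀ x ∈ Metric.ball (0 : Rd d) 1, ∀ y ∈ Metric.ball (0 : Rd d) 1,
        |u x t - u y t| ≤ Cκ * ‖x - y‖ ^ κ) →
      ∀ L : ℝ, 0 < L → ∀ ω : ℝ → ℝ, (∀ ρ : ℝ, 0 ≤ ω ρ) →
      ∀ ψ : Rd d → ℝ, (∀ x, 0 ≤ ψ x) →
      ∀ xb yb : Rd d, ∀ tb : ℝ,
        xb ∈ Metric.ball (0 : Rd d) 1 → yb ∈ Metric.ball (0 : Rd d) 1 → tb ∈ Ioo (-1:ℝ) 0 →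
        -- positive supremum attained at the interior point (xb, yb, tb)
        (0 < u xb tb - u yb tb - L * ω ‖xb - yb‖ - L₂ * ψ xb - L₂ * (-tb) ^ (1 + βs)) →
        (∀ x ∈ Metric.closedBall (0 : Rd d) 1, ∀ y ∈ Metric.closedBall (0 : Rd d) 1,
          ∀ t ∈ Icc (-1:ℝ) 0,
          u x t - u y t - L * ω ‖x - y‖ - L₂ * ψ x - L₂ * (-t) ^ (1 + βs) ≤
            u xb tb - u yb tb - L * ω ‖xb - yb‖ - L₂ * ψ xb - L₂ * (-tb) ^ (1 + βs)) →
      ∀ Ix Iy : ℝ,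
        HasFracPLap d s p (fun x => u x tb) xb Ix →
        HasFracPLap d s p (fun x => u x tb) yb Iy →
        Ix - Iy ≤ L₂ * (1 + βs) * (-tb) ^ βs →
        Ix - Iy ≤ C * ‖xb - yb‖ ^ (κ * βs / (1 + βs)) := by
  refine ⟨L₂ * (1 + βs) * (Cκ / L₂) ^ (βs / (1 + βs)), by positivity, ?_⟩
  intro u _ _ hHolder L hL ω hω ψ hψ xb yb tb hxb hyb htb hpos _ Ix Iy _ _ hI
  have hosc : u xb tb - u yb tb ≤ Cκ * ‖xb - yb‖ ^ κ :=
    (le_abs_self _).trans (hHolder tb ⟨htb.1, htb.2.le⟩ xb hxb yb hyb)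
  have htime : (-tb) ^ (1 + βs) ≤ Cκ / L₂ * ‖xb - yb‖ ^ κ := by
    rw [div_mul_eq_mul_div, le_div_iff₀ hL₂]
    linarith [mul_nonneg hL.le (hω ‖xb - yb‖), mul_nonneg hL₂.le (hψ xb)]
  calc Ix - Iy ≤ L₂ * (1 + βs) * (-tb) ^ βs := hI
    _ ≤ L₂ * (1 + βs) * ((Cκ / L₂) ^ (βs / (1 + βs)) * ‖xb - yb‖ ^ (κ * βs / (1 + βs))) := by
        gcongr
        exact rpow_le_of_rpow_one_add_le (by linarith [htb.2]) (by positivity) (norm_nonneg _)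
          hβ htime
    _ = L₂ * (1 + βs) * (Cκ / L₂) ^ (βs / (1 + βs)) * ‖xb - yb‖ ^ (κ * βs / (1 + βs)) := by
        ring

/-- Estimate on the difference of fractional `p`-Laplacians at the
maximum point of the doubled-variables function. -/
theorem statement17
    (d : ℕ) (hd : 1 ≤ d) (s p : ℝ) (hs : s ∈ Ioo (0:ℝ) 1) (hp : 2 ≤ p)
    (κ Cκ L₂ βs : ℝ) (hκ : κ ∈ Ioo (0:ℝ) 1) (hCκ : 0 < Cκ) (hL₂ : 0 < L₂) (hβ : 0 < βs) :
    ∃ C : ℝ, 0 < C ∧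
    ∀ u : Rd d → ℝ → ℝ,
      IsViscositySol d s p u (Metric.ball (0 : Rd d) 1) (-1) 0 →
      -- normalization
      (∃ M₁ M₂ : ℝ, (∀ q ∈ pCyl d (0 : Rd d) 0 1, |u q.1 q.2| ≤ M₁) ∧
        (∀ t ∈ Ioc (-1:ℝ) 0, MemTailSpace d s p (fun x => u x t) ∧
          tailNorm d s p (fun x => u x t) ≤ M₂) ∧ M₁ + M₂ ≤ 1) →
      -- spatial Hölder bound
      (∀ t ∈ Ioc (-1:ℝ) 0, ∀ x ∈ Metric.ball (0 : Rd d) 1, ∀ y ∈ Metric.ball (0 : Rd d) 1,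
        |u x t - u y t| ≤ Cκ * ‖x - y‖ ^ κ) →
      ∀ L : ℝ, 0 < L → ∀ ω : ℝ → ℝ, (∀ ρ : ℝ, 0 ≤ ω ρ) →
      ∀ ψ : Rd d → ℝ, (∀ x, 0 ≤ ψ x) →
      ∀ xb yb : Rd d, ∀ tb : ℝ,
        xb ∈ Metric.ball (0 : Rd d) 1 → yb ∈ Metric.ball (0 : Rd d) 1 → tb ∈ Ioo (-1:ℝ) 0 →
        -- positive supremum attained at the interior point (xb, yb, tb)
        (0 < u xb tb - u yb tb - L * ω ‖xb - yb‖ - L₂ * ψ xb - L₂ * (-tb) ^ (1 + βs)) →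
        (∀ x ∈ Metric.closedBall (0 : Rd d) 1, ∀ y ∈ Metric.closedBall (0 : Rd d) 1,
          ∀ t ∈ Icc (-1:ℝ) 0,
          u x t - u y t - L * ω ‖x - y‖ - L₂ * ψ x - L₂ * (-t) ^ (1 + βs) ≤
            u xb tb - u yb tb - L * ω ‖xb - yb‖ - L₂ * ψ xb - L₂ * (-tb) ^ (1 + βs)) →
      ∀ Ix Iy : ℝ,
        HasFracPLap d s p (fun x => u x tb) xb Ix →
        HasFracPLap d s p (fun x => u x tb) yb Iy →
        Ix - Iy ≤ L₂ * (1 + βs) * (-tb) ^ βs →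
        Ix - Iy ≤ C * ‖xb - yb‖ ^ (κ * βs / (1 + βs)) :=
  statement17_general d s p κ Cκ L₂ βs hCκ hL₂ hβ

end
end
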